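/- arXiv:0903.1642 — 6 statements merged into one kernel-verified Lean document; each statement's English description precedes it below -/
import Mathlib

section
/- For every infinite set S ⊆ ℕ and every Bohr₀-set A ⊆ ℤ, A ∩ Δ(S) ≠ ∅; that is, every Bohr₀-set is a Δ*-set. -/
/-- `Δ(S) = {b − a : a, b ∈ S, b > a}`, viewed as a set of integers. -/
def deltaSet (S : Set ℕ) : Set ℤ :=
  { n : ℤ | ∃ a ∈ S, ∃ b ∈ S, a < b ∧ n = (b : ℤ) - (a : ℤ) }

/-- `A ⊆ ℤ` is a Bohr₀-set. -/
def IsBohr0 (A : Set ℤ) : Prop :=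
  ∃ m : ℕ, 0 < m ∧ ∃ (α : Fin m → AddCircle (1 : ℝ)) (U : Set (Fin m → AddCircle (1 : ℝ))),
    IsOpen U ∧ (0 : Fin m → AddCircle (1 : ℝ)) ∈ U ∧
    { n : ℤ | (fun i => n • α i) ∈ U } ⊆ A

/-!
By compactness of the torus, the points `n • α`, `n ∈ S`, accumulate at some `x`, so infinitely
many of them lie in a neighbourhood `W` of `x` with `W - W ⊆ U`. For two such `a < b` in `S`,
`(b - a) • α = b • α - a • α ∈ U`.
-/

open Filter Topology

theorem Set.Infinite.exists_infinite_preimage_nhds {X ι : Type*} [TopologicalSpace X]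
    [CompactSpace X] {S : Set ι} (hS : S.Infinite) (f : ι → X) :
    ∃ x, ∀ W ∈ 𝓝 x, {i ∈ S | f i ∈ W}.Infinite := by
  have := hS.cofinite_inf_principal_neBot
  obtain ⟨x, -, hx⟩ :=
    isCompact_univ.exists_mapClusterPt (f := cofinite ⊓ 𝓟 S) (u := f) (by simp)
  refine ⟨x, fun W hW ↦ ?_⟩
  have hfreq := mapClusterPt_iff_frequently.mp hx W hW
  rw [frequently_inf_principal, frequently_cofinite_iff_infinite] at hfreq
  simpa only [and_comm] using hfreq

theorem exists_mem_nhds_sub_mem {G : Type*} [AddGroup G] [TopologicalSpace G] [ContinuousSub G]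
    (x : G) {U : Set G} (hU : U ∈ 𝓝 0) : ∃ W ∈ 𝓝 x, ∀ y ∈ W, ∀ z ∈ W, y - z ∈ U := by
  have hsub : Tendsto (fun p : G × G ↦ p.1 - p.2) (𝓝 x ×ˢ 𝓝 x) (𝓝 0) := by
    simpa [nhds_prod_eq] using (continuous_sub.tendsto (x, x))
  obtain ⟨W, hW, hWW⟩ := mem_prod_self_iff.mp (hsub hU)
  exact ⟨W, hW, fun y hy z hz ↦ hWW (Set.mk_mem_prod hy hz)⟩

theorem exists_lt_sub_mem_nhds_zero {G ι : Type*} [AddGroup G] [TopologicalSpace G]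
    [ContinuousSub G] [CompactSpace G] [LinearOrder ι] {S : Set ι} (hS : S.Infinite) (f : ι → G)
    {U : Set G} (hU : U ∈ 𝓝 0) : ∃ a ∈ S, ∃ b ∈ S, a < b ∧ f b - f a ∈ U := by
  obtain ⟨x, hx⟩ := hS.exists_infinite_preimage_nhds f
  obtain ⟨W, hW, hWU⟩ := exists_mem_nhds_sub_mem x hU
  obtain ⟨a, ⟨haS, haW⟩, b, ⟨hbS, hbW⟩, hab⟩ := (hx W hW).nontrivial.exists_lt
  exact ⟨a, haS, b, hbS, hab, hWU _ hbW _ haW⟩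

/-- For every infinite `S ⊆ ℕ` and every Bohr₀-set `A ⊆ ℤ`, `A ∩ Δ(S) ≠ ∅`;
that is, every Bohr₀-set is a `Δ*`-set. -/
theorem isBohr0_isDeltaStar (A : Set ℤ) (hA : IsBohr0 A)
    (S : Set ℕ) (hS : S.Infinite) :
    (A ∩ deltaSet S).Nonempty := by
  obtain ⟨m, -, α, U, hU, hU0, hUA⟩ := hA
  obtain ⟨a, ha, b, hb, hab, hmem⟩ :=
    exists_lt_sub_mem_nhds_zero hS (fun n : ℕ ↦ (n : ℤ) • α) (hU.mem_nhds hU0)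
  refine ⟨(b : ℤ) - a, hUA ?_, a, ha, b, hb, hab, rfl⟩
  change ((b : ℤ) - a) • α ∈ U
  rwa [sub_smul]
end

section
/- If A ⊆ ℤ has positive upper Banach density, then the difference set A − A = {a − b : a, b ∈ A} is syndetic. -/
/-!
If `A - A` is not syndetic, its complement contains arbitrarily long intervals, and these let
one choose, for every `k`, shifts `t 0, …, t (k - 1)` whose differences avoid `A - A`. The
translates `A + t i` are then pairwise disjoint, so `k` copies of `A ∩ I` fit into an interval
only boundedly longer than `I`; hence `A` has upper Banach density at most `1 / k` for every `k`.
-/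

open Filter Finset
open scoped Pointwise

/-- `S ⊆ ℤ` is syndetic: some `N > 0` is such that every interval of `N` consecutive
integers meets `S`. -/
def SyndeticZ (S : Set ℤ) : Prop :=
  ∃ N : ℕ, 0 < N ∧ ∀ a : ℤ, ∃ s ∈ S, a ≤ s ∧ s < a + N

open scoped Classical in
/-- The upper Banach density of `A ⊆ ℤ`: the limsup over `N → ∞` of the supremum,
over intervals `I` of `N` consecutive integers, of `|A ∩ I| / N`. -/
noncomputable def upperBanachDensity (A : Set ℤ) : ℝ :=
  Filter.limsup (fun N : ℕ =>
    ⨆ a : ℤ, (((Finset.Icc a (a + (N : ℤ) - 1)).filter (fun x => x ∈ A)).card : ℝ) / N)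
    Filter.atTop

lemma exists_natAbs_le (t : ℕ → ℤ) (k : ℕ) : ∃ M : ℕ, ∀ i < k, (t i).natAbs ≤ M :=
  ⟨∑ i ∈ range k, (t i).natAbs, fun _ hi => single_le_sum (f := fun i => (t i).natAbs) (fun _ _ => Nat.zero_le _)
    (mem_range.2 hi)⟩

lemma exists_gap_of_not_syndeticZ {S : Set ℤ} (hS : ¬SyndeticZ S) (N : ℕ) :
    ∃ a : ℤ, ∀ s ∈ S, s < a ∨ a + N ≤ s := by
  by_contra! h
  exact hS ⟨N + 1, N.succ_pos, fun a => by
    obtain ⟨s, hs, hlo, hhi⟩ := h a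
    exact ⟨s, hs, hlo, by omega⟩⟩

lemma exists_seq_sub_not_mem_of_not_syndeticZ {S : Set ℤ} (hS : ¬SyndeticZ S) (k : ℕ) :
    ∃ t : ℕ → ℤ, ∀ i j, i < j → j < k → t j - t i ∉ S := by
  induction k with
  | zero => exact ⟨0, fun _ _ _ hj => absurd hj (Nat.not_lt_zero _)⟩
  | succ k ih =>
    obtain ⟨t, ht⟩ := ih
    obtain ⟨M, hM⟩ := exists_natAbs_le t k
    -- the new shift sits in the middle of a gap of length `2M + 1`
    obtain ⟨a, ha⟩ := exists_gap_of_not_syndeticZ hS (2 * M + 1)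
    refine ⟨Function.update t k (a + M), fun i j hij hj => ?_⟩
    have hik : i ≠ k := by omega
    rcases (Nat.lt_succ_iff.1 hj).lt_or_eq with hjk | rfl
    · simpa only [Function.update_of_ne hik, Function.update_of_ne hjk.ne] using ht i j hij hjk
    · rw [Function.update_self, Function.update_of_ne hik]
      intro hs
      have := hM i hij
      rcases ha _ hs with h | h <;> omega

open scoped Classical in
lemma card_filter_Icc_mul_le {A : Set ℤ} {t : ℕ → ℤ} {k M : ℕ}
    (ht : ∀ i j, i < j → j < k → t j - t i ∉ A - A) (hM : ∀ i < k, (t i).natAbs ≤ M)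
    (N : ℕ) (a : ℤ) :
    k * #{x ∈ Icc a (a + N - 1) | x ∈ A} ≤ N + 2 * M := by
  set F := {x ∈ Icc a (a + N - 1) | x ∈ A}
  have hinj : Set.InjOn (fun p : ℕ × ℤ => p.2 + t p.1) ↑(range k ×ˢ F) := by
    rintro ⟨i, x⟩ hix ⟨j, y⟩ hjy hxy
    simp only [coe_product, Set.mem_prod, mem_coe, mem_range, F, mem_filter] at hix hjy hxy
    have hsub : ∀ i j x y, i < j → j < k → x ∈ A → y ∈ A → x + t i ≠ y + t j :=
      fun i j x y hij hjk hx hy hxy => ht i j hij hjk (Set.mem_sub.2 ⟨x, hx, y, hy, by omega⟩)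
    rcases lt_trichotomy i j with hij | rfl | hij
    · exact absurd hxy (hsub i j x y hij hjy.1 hix.2.2 hjy.2.2)
    · simp only [Prod.mk.injEq, true_and]; omega
    · exact absurd hxy.symm (hsub j i y x hij hix.1 hjy.2.2 hix.2.2)
  have hmaps : Set.MapsTo (fun p : ℕ × ℤ => p.2 + t p.1) ↑(range k ×ˢ F)
      ↑(Icc (a - M) (a + N - 1 + M)) := by
    rintro ⟨i, x⟩ hix
    simp only [coe_product, Set.mem_prod, mem_coe, mem_range, F, mem_filter, mem_Icc] at hix ⊢
    have := hM i hix.1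
    omega
  calc k * #F = #(range k ×ˢ F) := by rw [card_product, card_range]
    _ ≤ #(Icc (a - M) (a + N - 1 + M)) := card_le_card_of_injOn _ hmaps hinj
    _ = N + 2 * M := by rw [Int.card_Icc]; omega

open scoped Classical in
lemma upperBanachDensity_le_of_card_le {A : Set ℤ} {c C : ℝ}
    (h : ∀ (N : ℕ) (a : ℤ), (#{x ∈ Icc a (a + N - 1) | x ∈ A} : ℝ) ≤ c * N + C) :
    upperBanachDensity A ≤ c := by
  have hlim : Tendsto (fun N : ℕ => c + C / N) atTop (nhds c) := by
    simpa using tendsto_const_nhds.add (tendsto_const_div_atTop_nhds_zero_nat C)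
  have hle : (fun N : ℕ => ⨆ a : ℤ, (#{x ∈ Icc a (a + N - 1) | x ∈ A} : ℝ) / N)
      ≤ᶠ[atTop] fun N : ℕ => c + C / N := by
    filter_upwards [eventually_gt_atTop 0] with N hN
    refine ciSup_le fun a => ?_
    have hN' : (0 : ℝ) < N := by exact_mod_cast hN
    rw [div_le_iff₀ hN', add_mul, div_mul_cancel₀ _ hN'.ne']
    linarith [h N a]
  refine (limsup_le_limsup hle ?_ hlim.isBoundedUnder_le).trans_eq hlim.limsup_eq
  exact isCoboundedUnder_le_of_le atTop fun N => Real.iSup_nonneg fun a => by positivity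

/-- If `A ⊆ ℤ` has positive upper Banach density, then the difference set
`A − A = {a − b : a, b ∈ A}` is syndetic. -/
theorem syndetic_sub_of_pos_upperBanachDensity (A : Set ℤ)
    (h : 0 < upperBanachDensity A) :
    SyndeticZ { x : ℤ | ∃ a ∈ A, ∃ b ∈ A, x = a - b } := by
  classical
  have hdiff : { x : ℤ | ∃ a ∈ A, ∃ b ∈ A, x = a - b } = A - A := by
    ext x; simp only [Set.mem_ofPred_eq, Set.mem_sub, eq_comm]
  rw [hdiff]
  by_contra hS
  obtain ⟨n, hn⟩ := exists_nat_one_div_lt h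
  obtain ⟨t, ht⟩ := exists_seq_sub_not_mem_of_not_syndeticZ hS (n + 1)
  obtain ⟨M, hM⟩ := exists_natAbs_le t (n + 1)
  have hdens : upperBanachDensity A ≤ 1 / (n + 1) := by
    refine upperBanachDensity_le_of_card_le (C := 2 * M / (n + 1)) fun N a => ?_
    have hcard : ((n + 1 : ℕ) : ℝ) * #{x ∈ Icc a (a + N - 1) | x ∈ A} ≤ N + 2 * M := by
      exact_mod_cast card_filter_Icc_mul_le ht hM N a
    rw [one_div_mul_eq_div, ← add_div, le_div_iff₀ (by positivity)]
    push_cast at hcard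
    linarith
  linarith
end

section
/- Let ℱ be a collection of subsets of ℤ every member of which is syndetic. Then every strongly piecewise-ℱ subset of ℤ is syndetic. -/
/-- `A` is strongly piecewise-`F`. -/
def StronglyPW (F : Set (Set ℤ)) (A : Set ℤ) : Prop :=
  ∀ aJ bJ : ℕ → ℤ,
    Filter.Tendsto (fun k => bJ k - aJ k) Filter.atTop Filter.atTop →
    ∃ aI bI : ℕ → ℤ,
      (∀ j, ∃ k, Set.Icc (aI j) (bI j) ⊆ Set.Icc (aJ k) (bJ k)) ∧
      Filter.Tendsto (fun j => bI j - aI j) Filter.atTop Filter.atTop ∧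
      ∃ Λ ∈ F, ∀ j, Λ ∩ Set.Icc (aI j) (bI j) ⊆ A

open Filter

lemma SyndeticZ.exists_mem_Icc {S : Set ℤ} (hS : SyndeticZ S) :
    ∃ N : ℤ, ∀ a b : ℤ, N ≤ b - a → ∃ s ∈ S, s ∈ Set.Icc a b := by
  obtain ⟨N, -, hN⟩ := hS
  refine ⟨N, fun a b hab => ?_⟩
  obtain ⟨s, hs, has, hsa⟩ := hN a
  exact ⟨s, hs, has, by omega⟩

lemma exists_Icc_disjoint_of_not_syndeticZ {A : Set ℤ} (hA : ¬ SyndeticZ A) (n : ℕ) :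
    ∃ a : ℤ, Disjoint A (Set.Icc a (a + n)) := by
  simp only [SyndeticZ, not_exists, not_and, not_forall] at hA
  obtain ⟨a, ha⟩ := hA (n + 1) n.succ_pos
  refine ⟨a, Set.disjoint_left.2 fun s hs ⟨has, hsa⟩ => ?_⟩
  have := ha s hs has
  push_cast at this
  omega

/-- If every member of `F` is syndetic, then every strongly piecewise-`F` subset
of `ℤ` is syndetic. -/
theorem syndetic_of_stronglyPW (F : Set (Set ℤ)) (hF : ∀ B ∈ F, SyndeticZ B)
    (A : Set ℤ) (hA : StronglyPW F A) : SyndeticZ A := by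
  by_contra hnot
  choose aJ hgap using exists_Icc_disjoint_of_not_syndeticZ hnot
  have hlen : Tendsto (fun k : ℕ => (aJ k + k) - aJ k) atTop atTop := by
    simpa using tendsto_natCast_atTop_atTop
  obtain ⟨aI, bI, hIJ, hIlen, Λ, hΛF, hΛA⟩ := hA aJ (fun k => aJ k + k) hlen
  obtain ⟨N, hN⟩ := (hF Λ hΛF).exists_mem_Icc
  obtain ⟨j, hj⟩ := (hIlen.eventually (eventually_ge_atTop N)).exists
  obtain ⟨s, hsΛ, hsI⟩ := hN (aI j) (bI j) hj
  obtain ⟨k, hk⟩ := hIJ j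
  exact Set.disjoint_left.1 (hgap k) (hΛA j ⟨hsΛ, hsI⟩) (hk hsI)
end

section
/- Let α be an irrational real number. Then there exists an infinite set S ⊆ ℕ such that for every n ∈ Δ(S), the distance from n²α to the nearest integer is at least 1/4. In particular, the set {n ∈ ℕ : ‖n²α‖ < 1/4} is not a Δ*-set. -/
/-- `Δ(S) = {b − a : a, b ∈ S, b > a}` as a set of natural numbers. -/
def deltaN (S : Set ℕ) : Set ℕ :=
  { n | ∃ a ∈ S, ∃ b ∈ S, a < b ∧ n = b - a }

/-- `A ⊆ ℕ` is a `Δ*`-set: `A ∩ Δ(S) ≠ ∅` for every infinite `S ⊆ ℕ`. -/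
def IsDeltaStarN (A : Set ℕ) : Prop :=
  ∀ S : Set ℕ, S.Infinite → (A ∩ deltaN S).Nonempty

/-!
Write `ξ = α mod 1 ∈ 𝕋` and call `c ∈ 𝕋` a Bohr limit if it is a limit point of `n² • ξ` along
`n → ∞` with `n • ξ → 0`. Bohr limits are closed under addition, since
`(a + b)² • ξ = a² • ξ + b² • ξ + (2a) • b • ξ` and the cross term vanishes once `b • ξ` is small
compared with `1 / a`.

If some Bohr limit `c` has `‖2 • c‖ ≥ 1/3`, choose `n₀ < n₁ < ⋯` with `nᵢ² • ξ ≈ c` and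
`(2nᵢ) • nⱼ • ξ ≈ 0` for `i < j`; then `(nⱼ - nᵢ)² • ξ ≈ 2 • c` has norm at least `1/4`.

Otherwise `2 • c = 0` for every Bohr limit `c`, because multiples of Bohr limits are Bohr limits and
every nonzero point of `𝕋` has a multiple of norm at least `1/3`. By compactness `2 • n² • ξ → 0`
along the Bohr sets, and then the polarization `(4q) • q' • ξ = 2 • (q + q')² • ξ - 2 • q² • ξ -
2 • q'² • ξ` forces `(4q) • q' • ξ ≈ 0` for all `q, q'` in a small Bohr set. Since `ξ` has infinite
order, some `q' = m r` in that Bohr set violates this.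
-/

open Filter Topology

local notation "𝕋" => UnitAddCircle

namespace UnitAddCircle

lemma exists_coe_eq_abs_eq_norm (y : 𝕋) : ∃ t : ℝ, (t : 𝕋) = y ∧ |t| = ‖y‖ := by
  induction y using QuotientAddGroup.induction_on with
  | H x => exact ⟨x - round x, by simp, (norm_eq (x := x)).symm⟩

lemma norm_nsmul_eq_mul_norm {y : 𝕋} {n : ℕ} (h : n * ‖y‖ ≤ 1 / 2) : ‖n • y‖ = n * ‖y‖ := by
  obtain ⟨t, rfl, ht⟩ := exists_coe_eq_abs_eq_norm y
  rw [← ht, ← Nat.abs_cast, ← abs_mul] at h ⊢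
  rw [← AddCircle.coe_nsmul, nsmul_eq_mul, AddCircle.norm_coe_eq_abs_iff (p := 1) one_ne_zero]
  simpa using h

lemma third_le_norm_nsmul {y : 𝕋} {n : ℕ} (h₁ : 1 / 3 ≤ n * ‖y‖) (h₂ : n * ‖y‖ ≤ 2 / 3) :
    1 / 3 ≤ ‖n • y‖ := by
  obtain ⟨t, rfl, ht⟩ := exists_coe_eq_abs_eq_norm y
  rw [← AddCircle.coe_nsmul, nsmul_eq_mul, norm_eq]
  rw [← ht, ← Nat.abs_cast, ← abs_mul] at h₁ h₂
  set x := (n : ℝ) * t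
  rcases lt_trichotomy (round x) 0 with h | h | h
  · have : (round x : ℝ) ≤ -1 := by exact_mod_cast (show round x ≤ -1 by omega)
    rw [abs_le] at h₂
    rw [le_abs]; left; linarith
  · simpa [h] using h₁
  · have : (1 : ℝ) ≤ round x := by exact_mod_cast h
    rw [abs_le] at h₂
    rw [le_abs]; right; linarith

lemma exists_third_le_norm_nsmul {y : 𝕋} (hy : y ≠ 0) :
    ∃ n : ℕ, 1 / 3 ≤ ‖n • y‖ ∧ n * ‖y‖ ≤ 2 / 3 := by
  have hhalf : ‖y‖ ≤ 1 / 2 := by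
    simpa using AddCircle.norm_le_half_period (p := 1) (x := y) one_ne_zero
  rcases le_or_gt (1 / 3) ‖y‖ with hy3 | hy3
  · exact ⟨1, by simpa using hy3, by linarith⟩
  have hpos : 0 < ‖y‖ := norm_pos_iff.2 hy
  -- the first multiple of `‖y‖` beyond `1/3` overshoots by less than `‖y‖`
  set n := ⌈1 / (3 * ‖y‖)⌉₊
  have hlo : 1 / 3 ≤ n * ‖y‖ := by
    have := Nat.le_ceil (1 / (3 * ‖y‖))
    rw [div_le_iff₀ (by positivity)] at this
    linarith
  have hhi : n * ‖y‖ ≤ 2 / 3 := by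
    have hn : (n : ℝ) < 1 / (3 * ‖y‖) + 1 := Nat.ceil_lt_add_one (by positivity)
    calc n * ‖y‖ ≤ (1 / (3 * ‖y‖) + 1) * ‖y‖ := by gcongr
      _ = 1 / 3 + ‖y‖ := by field_simp
      _ ≤ 2 / 3 := by linarith
  exact ⟨n, third_le_norm_nsmul hlo hhi, hhi⟩

end UnitAddCircle

lemma add_sq_nsmul {G : Type*} [AddCommMonoid G] (a b : ℕ) (ξ : G) :
    (a + b) ^ 2 • ξ = a ^ 2 • ξ + b ^ 2 • ξ + (2 * a) • b • ξ := by
  module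

lemma tsub_sq_nsmul {G : Type*} [AddCommGroup G] {a b : ℕ} (h : a ≤ b) (ξ : G) :
    (b - a) ^ 2 • ξ = b ^ 2 • ξ + a ^ 2 • ξ - (2 * a) • b • ξ := by
  obtain ⟨d, rfl⟩ := Nat.exists_eq_add_of_le h
  rw [Nat.add_sub_cancel_left]
  module

lemma exists_le_norm_nsmul_lt (ξ : 𝕋) (M : ℕ) {ε : ℝ} (hε : 0 < ε) :
    ∃ n, M ≤ n ∧ ‖n • ξ‖ < ε := by
  obtain ⟨N, hN⟩ := exists_nat_one_div_lt hε
  obtain ⟨j, hj, hjξ⟩ := AddCircle.exists_norm_nsmul_le ((M + 1) • ξ) N.succ_pos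
  refine ⟨j * (M + 1), ?_, ?_⟩
  · nlinarith [hj.1]
  · rw [mul_nsmul']
    refine hjξ.trans_lt (lt_of_le_of_lt ?_ hN)
    gcongr
    push_cast
    linarith

def bohrFilter (ξ : 𝕋) : Filter ℕ := atTop ⊓ comap (· • ξ) (𝓝 0)

lemma bohrFilter_basis (ξ : 𝕋) :
    (bohrFilter ξ).HasBasis (fun p : ℕ × ℝ => 0 < p.2) fun p => {n | p.1 ≤ n ∧ ‖n • ξ‖ < p.2} := by
  refine (atTop_basis.inf (Metric.nhds_basis_ball.comap (· • ξ))).to_hasBasis ?_ ?_ <;>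
    exact fun p hp => ⟨p, by simpa using hp, fun n hn => by simpa using hn⟩

def bohrLimits (ξ : 𝕋) : Set 𝕋 := {x | MapClusterPt x (bohrFilter ξ) fun n => n ^ 2 • ξ}

lemma mem_bohrLimits_iff {ξ x : 𝕋} :
    x ∈ bohrLimits ξ ↔
      ∀ ε > 0, ∀ M : ℕ, ∀ δ > 0, ∃ n, M ≤ n ∧ ‖n • ξ‖ < δ ∧ ‖n ^ 2 • ξ - x‖ < ε := by
  simp [bohrLimits, Metric.nhds_basis_ball.mapClusterPt_iff_frequently,
    (bohrFilter_basis ξ).frequently_iff, dist_eq_norm, and_assoc]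

section

variable {ξ : 𝕋}

lemma add_mem_bohrLimits {x y : 𝕋} (hx : x ∈ bohrLimits ξ) (hy : y ∈ bohrLimits ξ) :
    x + y ∈ bohrLimits ξ := by
  rw [mem_bohrLimits_iff] at *
  intro ε hε M δ hδ
  obtain ⟨a, haM, ha, hax⟩ := hx (ε / 3) (by positivity) M (δ / 2) (by positivity)
  -- `b • ξ` must be small enough to make the cross term `(2a) • b • ξ` negligible
  obtain ⟨b, -, hb, hby⟩ :=
    hy (ε / 3) (by positivity) 0 (min (δ / 2) (ε / (3 * (2 * a + 1)))) (by positivity)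
  have hcross : ‖(2 * a) • b • ξ‖ ≤ ε / 3 :=
    calc ‖(2 * a) • b • ξ‖ ≤ (2 * a : ℕ) * ‖b • ξ‖ := norm_nsmul_le
      _ ≤ (2 * a + 1) * (ε / (3 * (2 * a + 1))) := by
        push_cast
        gcongr
        · linarith
        · exact hb.le.trans (min_le_right _ _)
      _ = ε / 3 := by field_simp
  refine ⟨a + b, haM.trans (Nat.le_add_right a b), ?_, ?_⟩
  · calc ‖(a + b) • ξ‖ ≤ ‖a • ξ‖ + ‖b • ξ‖ := by rw [add_nsmul]; exact norm_add_le _ _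
      _ < δ := by linarith [min_le_left (δ / 2) (ε / (3 * (2 * a + 1)))]
  · calc ‖(a + b) ^ 2 • ξ - (x + y)‖ = ‖(a ^ 2 • ξ - x) + (b ^ 2 • ξ - y) + (2 * a) • b • ξ‖ := by
          rw [add_sq_nsmul]; abel_nf
      _ ≤ ‖a ^ 2 • ξ - x‖ + ‖b ^ 2 • ξ - y‖ + ‖(2 * a) • b • ξ‖ := norm_add₃_le
      _ < ε := by linarith

lemma nsmul_mem_bohrLimits {x : 𝕋} (hx : x ∈ bohrLimits ξ) {n : ℕ} (hn : n ≠ 0) :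
    n • x ∈ bohrLimits ξ := by
  induction n with
  | zero => exact absurd rfl hn
  | succ n ih =>
    rcases eq_or_ne n 0 with rfl | hn0
    · simpa using hx
    · simpa [succ_nsmul] using add_mem_bohrLimits (ih hn0) hx

lemma two_nsmul_eq_zero_of_forall_norm_lt (h : ∀ z ∈ bohrLimits ξ, ‖2 • z‖ < 1 / 3) :
    ∀ x ∈ bohrLimits ξ, 2 • x = 0 := by
  intro x hx
  by_contra hx0
  obtain ⟨n, hn, -⟩ := UnitAddCircle.exists_third_le_norm_nsmul hx0
  have hn0 : n ≠ 0 := by rintro rfl; norm_num at hn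
  have := h _ (nsmul_mem_bohrLimits hx hn0)
  rw [smul_comm] at this
  linarith

lemma eventually_norm_two_nsmul_sq_lt (h : ∀ x ∈ bohrLimits ξ, 2 • x = 0) {ρ : ℝ} (hρ : 0 < ρ) :
    ∀ᶠ n in bohrFilter ξ, ‖2 • n ^ 2 • ξ‖ < ρ := by
  by_contra hfreq
  simp only [not_eventually, not_lt] at hfreq
  have hK : IsCompact {z : 𝕋 | ρ ≤ ‖2 • z‖} :=
    (isClosed_le continuous_const (continuous_nsmul 2).norm).isCompact
  obtain ⟨x, hxK, hx⟩ := hK.exists_mapClusterPt_of_frequently hfreq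
  have : ρ ≤ ‖2 • x‖ := hxK
  rw [h x hx, norm_zero] at this
  linarith

lemma exists_le_norm_nsmul_le_third_le_norm_nsmul (hξ : ¬IsOfFinAddOrder ξ) (M : ℕ) {k : ℕ}
    (hk : k ≠ 0) : ∃ n, M ≤ n ∧ ‖n • ξ‖ ≤ 2 / (3 * k) ∧ 1 / 3 ≤ ‖k • n • ξ‖ := by
  have hk0 : (0 : ℝ) < k := by exact_mod_cast Nat.pos_of_ne_zero hk
  obtain ⟨r, hrM, hr⟩ := exists_le_norm_nsmul_lt ξ (M + 1) (by positivity : 0 < 1 / (2 * (k : ℝ)))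
  have hy : ‖k • r • ξ‖ = k * ‖r • ξ‖ := by
    refine UnitAddCircle.norm_nsmul_eq_mul_norm ?_
    calc k * ‖r • ξ‖ ≤ k * (1 / (2 * k)) := by gcongr
      _ = 1 / 2 := by field_simp
  have hy0 : k • r • ξ ≠ 0 := by
    rw [← mul_nsmul']
    exact fun h => hξ <| isOfFinAddOrder_iff_nsmul_eq_zero.2
      ⟨_, Nat.mul_pos (Nat.pos_of_ne_zero hk) (by omega), h⟩
  obtain ⟨m, hmy, hm⟩ := UnitAddCircle.exists_third_le_norm_nsmul hy0
  have hm0 : m ≠ 0 := by rintro rfl; norm_num at hmy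
  refine ⟨m * r, ?_, ?_, ?_⟩
  · have := Nat.le_mul_of_pos_left r (Nat.pos_of_ne_zero hm0)
    omega
  · calc ‖(m * r) • ξ‖ ≤ m * ‖r • ξ‖ := by rw [mul_nsmul']; exact norm_nsmul_le
      _ = m * ‖k • r • ξ‖ / k := by rw [hy]; field_simp
      _ ≤ 2 / 3 / k := by gcongr
      _ = 2 / (3 * k) := by ring
  · rwa [mul_nsmul', smul_comm]

lemma exists_mem_bohrLimits_third_le_norm_two_nsmul (hξ : ¬IsOfFinAddOrder ξ) :
    ∃ c ∈ bohrLimits ξ, 1 / 3 ≤ ‖2 • c‖ := by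
  by_contra! hsmall
  obtain ⟨⟨M, ε⟩, hε, hM⟩ := (bohrFilter_basis ξ).eventually_iff.1 <|
    eventually_norm_two_nsmul_sq_lt (two_nsmul_eq_zero_of_forall_norm_lt hsmall)
      (ρ := 1 / 12) (by norm_num)
  dsimp only at hε hM
  obtain ⟨q, hqM, hq⟩ := exists_le_norm_nsmul_lt ξ (M + 1 + ⌈1 / ε⌉₊) (half_pos hε)
  have hqε : 1 ≤ q * ε := by
    have : 1 / ε ≤ q := (Nat.le_ceil _).trans (by exact_mod_cast (by omega : ⌈1 / ε⌉₊ ≤ q))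
    rwa [div_le_iff₀ hε] at this
  obtain ⟨q', hq'M, hq', hqq'⟩ :=
    exists_le_norm_nsmul_le_third_le_norm_nsmul hξ M (k := 4 * q) (by omega)
  have hq'ε : ‖q' • ξ‖ ≤ ε / 6 := by
    refine hq'.trans ?_
    have hq0 : (0 : ℝ) < q := by exact_mod_cast (by omega : 0 < q)
    rw [div_le_iff₀ (by push_cast; positivity)]
    push_cast
    nlinarith
  have hsum : ‖(q + q') • ξ‖ < ε :=
    calc ‖(q + q') • ξ‖ ≤ ‖q • ξ‖ + ‖q' • ξ‖ := by rw [add_nsmul]; exact norm_add_le _ _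
      _ < ε := by linarith
  have h₁ : ‖2 • q ^ 2 • ξ‖ < 1 / 12 := hM ⟨by omega, by linarith⟩
  have h₂ : ‖2 • q' ^ 2 • ξ‖ < 1 / 12 := hM ⟨hq'M, by linarith⟩
  have h₃ : ‖2 • (q + q') ^ 2 • ξ‖ < 1 / 12 := hM ⟨by omega, hsum⟩
  have hpolar : (4 * q) • q' • ξ = 2 • (q + q') ^ 2 • ξ - 2 • q ^ 2 • ξ - 2 • q' ^ 2 • ξ := by
    rw [add_sq_nsmul]
    module
  have : ‖(4 * q) • q' • ξ‖ < 1 / 3 :=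
    calc ‖(4 * q) • q' • ξ‖ ≤ ‖2 • (q + q') ^ 2 • ξ‖ + ‖2 • q ^ 2 • ξ‖ + ‖2 • q' ^ 2 • ξ‖ := by
          rw [hpolar]
          exact (norm_sub_le _ _).trans (by gcongr; exact norm_sub_le _ _)
      _ < 1 / 3 := by linarith
  linarith

lemma exists_infinite_forall_mem_deltaN_quarter_le_norm (hξ : ¬IsOfFinAddOrder ξ) :
    ∃ S : Set ℕ, S.Infinite ∧ ∀ n ∈ deltaN S, 1 / 4 ≤ ‖n ^ 2 • ξ‖ := by
  obtain ⟨c, hc, hc3⟩ := exists_mem_bohrLimits_third_le_norm_two_nsmul hξ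
  -- For `a < b` in `S`, `(b - a)² • ξ = b² • ξ + a² • ξ - (2a) • b • ξ` is `1/12`-close to `2 • c`.
  obtain ⟨f, hfc, hf⟩ := exists_seq_of_forall_finset_exists (fun b => ‖b ^ 2 • ξ - c‖ < 1 / 36)
    (fun a b => a < b ∧ ‖(2 * a) • b • ξ‖ < 1 / 36) fun s _ => by
      set N := s.sup id
      obtain ⟨b, hNb, hb, hbc⟩ :=
        mem_bohrLimits_iff.1 hc (1 / 36) (by norm_num) (N + 1) (1 / (72 * (N + 1))) (by positivity)
      refine ⟨b, hbc, fun a ha => ?_⟩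
      have haN : a ≤ N := Finset.le_sup (f := id) ha
      refine ⟨by omega, ?_⟩
      calc ‖(2 * a) • b • ξ‖ ≤ (2 * a : ℕ) * ‖b • ξ‖ := norm_nsmul_le
        _ ≤ 2 * (N + 1) * ‖b • ξ‖ := by
          push_cast
          gcongr
          exact_mod_cast haN.trans N.le_succ
        _ < 2 * (N + 1) * (1 / (72 * (N + 1))) := by gcongr
        _ = 1 / 36 := by field_simp; norm_num
  have hmono : StrictMono f := fun m n hmn => (hf m n hmn).1
  refine ⟨Set.range f, Set.infinite_range_of_injective hmono.injective, ?_⟩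
  rintro _ ⟨_, ⟨i, rfl⟩, _, ⟨j, rfl⟩, hfij, rfl⟩
  have hcross := (hf i j (hmono.lt_iff_lt.1 hfij)).2
  have hsplit : (f j - f i) ^ 2 • ξ - 2 • c =
      (f j ^ 2 • ξ - c) + (f i ^ 2 • ξ - c) - (2 * f i) • f j • ξ := by
    rw [tsub_sq_nsmul hfij.le]; abel
  have herr : ‖(f j - f i) ^ 2 • ξ - 2 • c‖ < 1 / 12 := by
    rw [hsplit]
    calc _ ≤ ‖f j ^ 2 • ξ - c‖ + ‖f i ^ 2 • ξ - c‖ + ‖(2 * f i) • f j • ξ‖ :=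
          (norm_sub_le _ _).trans (by gcongr; exact norm_add_le _ _)
      _ < 1 / 12 := by linarith [hfc i, hfc j]
  linarith [norm_le_norm_add_norm_sub ((f j - f i) ^ 2 • ξ) (2 • c)]

end

/-- For irrational `α` there is an infinite `S ⊆ ℕ` such that `‖n²α‖ ≥ 1/4` for every
`n ∈ Δ(S)`, where `‖x‖` is the distance from `x` to the nearest integer (the norm on
`ℝ/ℤ`).  In particular `{n : ‖n²α‖ < 1/4}` is not a `Δ*`-set. -/
theorem exists_infinite_delta_far_from_integers (α : ℝ) (hα : Irrational α) :
    (∃ S : Set ℕ, S.Infinite ∧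
      ∀ n ∈ deltaN S, (1 : ℝ) / 4 ≤ ‖(((n : ℝ) ^ 2 * α : ℝ) : AddCircle (1 : ℝ))‖) ∧
    ¬ IsDeltaStarN { n : ℕ | ‖(((n : ℝ) ^ 2 * α : ℝ) : AddCircle (1 : ℝ))‖ < 1 / 4 } := by
  have hξ : ¬IsOfFinAddOrder (α : 𝕋) :=
    AddCircle.not_isOfFinAddOrder_iff_forall_rat_ne_div.2 fun q hq => hα ⟨q, by simpa using hq⟩
  have hcoe (n : ℕ) : (((n : ℝ) ^ 2 * α : ℝ) : 𝕋) = n ^ 2 • (α : 𝕋) := by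
    rw [← AddCircle.coe_nsmul, nsmul_eq_mul, Nat.cast_pow]
  simp only [hcoe]
  obtain ⟨S, hS, hfar⟩ := exists_infinite_forall_mem_deltaN_quarter_le_norm hξ
  refine ⟨⟨S, hS, hfar⟩, fun h => ?_⟩
  obtain ⟨n, hnA, hnS⟩ := h S hS
  exact (hfar n hnS).not_gt hnA
end

section
/- Let 𝒜 be a subalgebra of ℓ^∞(ℤ), the algebra of bounded real-valued sequences indexed by ℤ with the supremum norm, such that 𝒜 contains the constant sequences, is invariant under the shift, and is closed and separable with respect to the supremum norm. Then there exist a compact metrizable topological space X, a homeomorphism T : X → X, and a point x₀ ∈ X such that the map sending a continuous function φ : X → ℝ to the sequence (φ(Tⁿx₀))_{n∈ℤ} is an isometric algebra isomorphism from C(X, ℝ) onto 𝒜. In particular, for every S ⊆ ℤ whose indicator sequence 𝟙_S belongs to 𝒜, there exists a clopen set S̃ ⊆ X such that for every n ∈ ℤ, Tⁿx₀ ∈ S̃ if and only if n ∈ S. -/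
open scoped Classical

/-!
Let `A` be the given algebra of bounded functions on `ι` (`ι = ℤ` in the theorem). Embed `ι`
into `ℝ^A` by `i ↦ (f ↦ f i)` and let `X` (`hull A`) be the closure of the image. It is compact
by Tychonoff, and its points are `1`-Lipschitz on `A`, so restricting them to a countable dense
subset of `A` embeds `X` into a countable power of `ℝ`. Composition with `ι → X` is isometric
because `ι` is dense in `X`, and its range is `A` by Stone–Weierstrass: the coordinate functions
`x ↦ x f` separate the points of `X` and are sent to the `f ∈ A`. A shift-invariance of `A`
transposes to a continuous self-map of `X`. Idempotents of `A` come from idempotents of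
`C(X, ℝ)`, which are indicators of clopen sets.
-/

open Set Function TopologicalSpace BoundedContinuousFunction

lemma Equiv.Perm.zpow_apply_comp_of_semiconj {α β : Type*} {e : Equiv.Perm α}
    {T : Equiv.Perm β} {p : α → β} (h : ∀ a, T (p a) = p (e a)) (n : ℤ) (a : α) :
    (T ^ n) (p a) = p ((e ^ n) a) := by
  induction n using Int.induction_on generalizing a with
  | zero => rfl
  | succ k ih => rw [zpow_add_one, zpow_add_one, Perm.mul_apply, Perm.mul_apply, h, ih]
  | pred k ih =>
    rw [zpow_sub_one, zpow_sub_one, Perm.mul_apply, Perm.mul_apply, ← ih]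
    congr 1
    rw [Perm.inv_eq_iff_eq, h, ← Perm.mul_apply, mul_inv_cancel, Perm.one_apply]

lemma ContinuousMap.isClopen_setOf_eq_one_of_isIdempotentElem {X : Type*} [TopologicalSpace X]
    {φ : C(X, ℝ)} (hφ : IsIdempotentElem φ) : IsClopen {x | φ x = 1} := by
  have hcompl : {x | φ x = 1}ᶜ = {x | φ x = 0} := by
    ext x
    rcases IsIdempotentElem.iff_eq_zero_or_one.1 (congrFun (congrArg DFunLike.coe hφ) x) with
      h | h <;> simp [h]
  refine ⟨isClosed_eq φ.continuous continuous_const, ?_⟩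
  rw [← isClosed_compl_iff, hcompl]
  exact isClosed_eq φ.continuous continuous_const

lemma exists_isClopen_of_indicator_mem_range {X ι : Type*} [TopologicalSpace X]
    [TopologicalSpace ι] {p : ι → X} (Φ : C(X, ℝ) →ₐ[ℝ] ι →ᵇ ℝ)
    (hΦ : ∀ φ i, Φ φ i = φ (p i)) (hinj : Injective Φ) {S : Set ι} {f : ι →ᵇ ℝ}
    (hf : f ∈ Φ.range) (hfS : ∀ i, f i = if i ∈ S then 1 else 0) :
    ∃ U : Set X, IsClopen U ∧ ∀ i, p i ∈ U ↔ i ∈ S := by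
  obtain ⟨φ, rfl⟩ := (AlgHom.mem_range _).1 hf
  have hidem : IsIdempotentElem φ := hinj <| by
    ext i
    rw [map_mul, BoundedContinuousFunction.mul_apply, hfS]
    split_ifs <;> norm_num
  refine ⟨_, ContinuousMap.isClopen_setOf_eq_one_of_isIdempotentElem hidem, fun i => ?_⟩
  change φ (p i) = 1 ↔ i ∈ S
  rw [← hΦ, hfS]
  split_ifs <;> simp [*]

noncomputable section

namespace Furstenberg

variable {ι : Type*} [TopologicalSpace ι] (A : Subalgebra ℝ (ι →ᵇ ℝ))

def eval (i : ι) : A → ℝ := fun f => (f : ι →ᵇ ℝ) i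

def hull : Set (A → ℝ) := closure (range (eval A))

def toHull : C(ι, hull A) :=
  ⟨fun i => ⟨eval A i, subset_closure (mem_range_self i)⟩,
    (continuous_pi fun f : A => (f : ι →ᵇ ℝ).continuous).subtype_mk _⟩

lemma denseRange_toHull : DenseRange (toHull A) := by
  rw [DenseRange, Topology.IsInducing.subtypeVal.dense_iff]
  intro x
  rw [← range_comp]
  exact x.2

lemma ext_hull {Y : Type*} [TopologicalSpace Y] [T2Space Y] {F G : C(hull A, Y)}
    (h : ∀ i, F (toHull A i) = G (toHull A i)) : F = G :=
  ContinuousMap.ext <| congrFun <|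
    (denseRange_toHull A).equalizer F.continuous G.continuous (funext h)

lemma isCompact_hull : IsCompact (hull A) := by
  refine (isCompact_univ_pi fun f : A => isCompact_closedBall (0 : ℝ) ‖f‖).of_isClosed_subset
    isClosed_closure (closure_minimal ?_ (isClosed_set_pi fun f _ => Metric.isClosed_closedBall))
  rintro _ ⟨i, rfl⟩ f -
  exact mem_closedBall_zero_iff.2 ((f : ι →ᵇ ℝ).norm_coe_le_norm i)

instance : CompactSpace (hull A) := isCompact_iff_compactSpace.mp (isCompact_hull A)

lemma lipschitzWith_one_hull (x : hull A) : LipschitzWith 1 (x : A → ℝ) := by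
  refine (denseRange_toHull A).induction_on x
    ((isClosed_setOfPred_lipschitzWith 1).preimage continuous_subtype_val) fun i => ?_
  have := (lipschitz_eval_const i).comp (LipschitzWith.subtype_val (A : Set (ι →ᵇ ℝ)))
  rw [mul_one] at this
  exact this

lemma metrizableSpace_hull (hsep : IsSeparable (A : Set (ι →ᵇ ℝ))) :
    MetrizableSpace (hull A) := by
  have := hsep.separableSpace
  obtain ⟨D, hDc, hD⟩ := exists_countable_dense A
  have := hDc.to_subtype
  let restrict : hull A → (D → ℝ) := fun x d => (x : A → ℝ) d
  have hinj : Injective restrict := fun x y h => Subtype.ext <|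
    (lipschitzWith_one_hull A x).continuous.ext_on hD (lipschitzWith_one_hull A y).continuous
      fun d hd => congrFun h ⟨d, hd⟩
  exact ((continuous_pi fun d => (continuous_apply _).comp continuous_subtype_val).isClosedEmbedding
    hinj).metrizableSpace

def compToHull : C(hull A, ℝ) →ₐ[ℝ] ι →ᵇ ℝ where
  toFun φ := (mkOfCompact φ).compContinuous (toHull A)
  map_one' := rfl
  map_mul' _ _ := rfl
  map_zero' := rfl
  map_add' _ _ := rfl
  commutes' _ := rfl

@[simp]
lemma compToHull_apply (φ : C(hull A, ℝ)) (i : ι) : compToHull A φ i = φ (toHull A i) := rfl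

lemma norm_compToHull (φ : C(hull A, ℝ)) : ‖compToHull A φ‖ = ‖φ‖ := by
  refine le_antisymm ((norm_le (norm_nonneg _)).2 fun i => φ.norm_coe_le_norm _)
    ((φ.norm_le (norm_nonneg _)).2 fun x => ?_)
  exact (denseRange_toHull A).induction_on x (isClosed_le (by fun_prop) continuous_const)
    fun i => (compToHull A φ).norm_coe_le_norm i

lemma isometry_compToHull : Isometry (compToHull A) :=
  AddMonoidHomClass.isometry_of_norm _ (norm_compToHull A)

def coord (f : A) : C(hull A, ℝ) :=
  ⟨fun x => (x : A → ℝ) f, (continuous_apply f).comp continuous_subtype_val⟩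

lemma compToHull_coord (f : A) : compToHull A (coord A f) = f := rfl

lemma range_compToHull (hclosed : IsClosed (A : Set (ι →ᵇ ℝ))) : (compToHull A).range = A := by
  refine le_antisymm ?_ fun f hf => ⟨coord A ⟨f, hf⟩, compToHull_coord A ⟨f, hf⟩⟩
  set B := A.comap (compToHull A)
  have hBclosed : IsClosed (B : Set C(hull A, ℝ)) :=
    hclosed.preimage (isometry_compToHull A).continuous
  have hBsep : B.SeparatesPoints := fun x y hxy => by
    obtain ⟨f, hf⟩ := Function.ne_iff.mp (Subtype.coe_ne_coe.mpr hxy)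
    exact ⟨_, ⟨coord A f, by simp [B, compToHull_coord], rfl⟩, hf⟩
  have hBtop : B = ⊤ := eq_top_iff.2 <|
    (ContinuousMap.subalgebra_topologicalClosure_eq_top_of_separatesPoints B hBsep).ge.trans
      (Subalgebra.topologicalClosure_minimal le_rfl hBclosed)
  rintro _ ⟨φ, rfl⟩
  exact (hBtop.ge Algebra.mem_top : φ ∈ B)

section HullMap

variable {A} (σ : ι → ι) (hσ : ∀ f ∈ A, ∃ g ∈ A, ∀ i, g i = f (σ i))

def precomp (f : A) : A := ⟨(hσ f f.2).choose, (hσ f f.2).choose_spec.1⟩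

lemma precomp_apply (f : A) (i : ι) : (precomp σ hσ f : ι →ᵇ ℝ) i = (f : ι →ᵇ ℝ) (σ i) :=
  (hσ f f.2).choose_spec.2 i

def precompMap : C(A → ℝ, A → ℝ) :=
  ⟨fun x f => x (precomp σ hσ f), continuous_pi fun _ => continuous_apply _⟩

lemma precompMap_eval (i : ι) : precompMap σ hσ (eval A i) = eval A (σ i) :=
  funext fun f => precomp_apply σ hσ f i

lemma mapsTo_precompMap_hull : MapsTo (precompMap σ hσ) (hull A) (hull A) := by
  refine MapsTo.closure ?_ (precompMap σ hσ).continuous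
  rintro _ ⟨i, rfl⟩
  exact ⟨σ i, (precompMap_eval σ hσ i).symm⟩

def hullMap : C(hull A, hull A) :=
  ⟨(mapsTo_precompMap_hull σ hσ).restrict, (precompMap σ hσ).continuous.restrict _⟩

lemma hullMap_toHull (i : ι) : hullMap σ hσ (toHull A i) = toHull A (σ i) :=
  Subtype.ext (precompMap_eval σ hσ i)

end HullMap

section HullHomeomorph

variable (e : ι ≃ ι) (he : ∀ f ∈ A, ∃ g ∈ A, ∀ i, g i = f (e i))
  (he' : ∀ f ∈ A, ∃ g ∈ A, ∀ i, g i = f (e.symm i))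

def hullHomeomorph : hull A ≃ₜ hull A where
  toFun := hullMap e he
  invFun := hullMap e.symm he'
  left_inv x := DFunLike.congr_fun (ext_hull A (F := (hullMap e.symm he').comp (hullMap e he))
    (G := .id _) fun i => by simp [hullMap_toHull]) x
  right_inv x := DFunLike.congr_fun (ext_hull A (F := (hullMap e he).comp (hullMap e.symm he'))
    (G := .id _) fun i => by simp [hullMap_toHull]) x
  continuous_toFun := (hullMap e he).continuous
  continuous_invFun := (hullMap e.symm he').continuous

lemma hullHomeomorph_zpow_toHull (n : ℤ) (i : ι) :
    ((hullHomeomorph A e he he').toEquiv ^ n) (toHull A i) = toHull A ((e ^ n) i) :=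
  Equiv.Perm.zpow_apply_comp_of_semiconj (hullMap_toHull e he) n i

end HullHomeomorph

end Furstenberg

end

open Furstenberg in
/-- **A version of the Furstenberg correspondence principle.**
Let `𝒜` be a subalgebra of `ℓ^∞(ℤ)` (bounded real sequences indexed by `ℤ` with the
sup norm; here realized as `BoundedContinuousFunction ℤ ℝ` for the discrete topology
on `ℤ`) which is invariant under the shift (in both directions), closed, and separable.
(Containing the constants is automatic for a subalgebra.)  Then there are a compact
metrizable space `X`, a homeomorphism `T : X ≃ₜ X` and a point `x₀ ∈ X` such that
`φ ↦ (φ(Tⁿx₀))ₙ` is an isometric algebra isomorphism from `C(X, ℝ)` onto `𝒜`.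
In particular, for every `S ⊆ ℤ` whose indicator sequence belongs to `𝒜` there is a
clopen `S̃ ⊆ X` with `Tⁿx₀ ∈ S̃ ↔ n ∈ S` for all `n`. -/
theorem furstenberg_correspondence
    (A : Subalgebra ℝ (BoundedContinuousFunction ℤ ℝ))
    (hclosed : IsClosed (A : Set (BoundedContinuousFunction ℤ ℝ)))
    (hsep : TopologicalSpace.IsSeparable (A : Set (BoundedContinuousFunction ℤ ℝ)))
    (hshift : ∀ f ∈ A, (∃ g ∈ A, ∀ n : ℤ, g n = f (n + 1)) ∧
      (∃ g ∈ A, ∀ n : ℤ, g n = f (n - 1))) :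
    ∃ (X : Type) (_ : TopologicalSpace X) (_ : CompactSpace X)
      (_ : TopologicalSpace.MetrizableSpace X) (T : X ≃ₜ X) (x₀ : X)
      (Φ : C(X, ℝ) →ₐ[ℝ] BoundedContinuousFunction ℤ ℝ),
      (∀ (φ : C(X, ℝ)) (n : ℤ), Φ φ n = φ ((T.toEquiv ^ n) x₀)) ∧
      Isometry Φ ∧
      Φ.range = A ∧
      ∀ (S : Set ℤ) (f : BoundedContinuousFunction ℤ ℝ), f ∈ A →
        (∀ n : ℤ, f n = if n ∈ S then 1 else 0) →
        ∃ Stilde : Set X, IsClopen Stilde ∧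
          ∀ n : ℤ, (T.toEquiv ^ n) x₀ ∈ Stilde ↔ n ∈ S := by
  set T := hullHomeomorph A (Equiv.addRight 1) (fun f hf => (hshift f hf).1)
    (fun f hf => (hshift f hf).2)
  have horbit (n : ℤ) : (T.toEquiv ^ n) (toHull A 0) = toHull A n := by
    simpa using hullHomeomorph_zpow_toHull A (Equiv.addRight 1) _ _ n 0
  have hΦ (φ : C(hull A, ℝ)) (n : ℤ) : compToHull A φ n = φ ((T.toEquiv ^ n) (toHull A 0)) := by
    rw [horbit, compToHull_apply]
  have hrange := range_compToHull A hclosed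
  refine ⟨hull A, inferInstance, inferInstance, metrizableSpace_hull A hsep, T, toHull A 0,
    compToHull A, hΦ, isometry_compToHull A, hrange, fun S f hf hfS => ?_⟩
  exact exists_isClopen_of_indicator_mem_range _ hΦ (isometry_compToHull A).injective
    (hrange.symm ▸ hf) hfS
end

section
/- Let d ≥ 1 and let (p_j)_{j≥1} be a sequence of positive integers. Define finite sets E_j ⊆ ℕ by E₀ = {0} and, for j ≥ 1, E_j = {0} ∪ ⋃_{k=1}^{min(j,d)} (E_{j−k} + p_{j−k+1}). Then for every j ≥ 0, E_j equals the set of all sums ε₁p₁ + ⋯ + ε_jp_j over ε ∈ {0,1}^j such that after the first index i with ε_i = 1 (if any), there is no block of d consecutive indices at which ε equals 0; in particular 0 ∈ E_j, corresponding to ε identically 0. -/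
/-- The sets `E_j` defined by `E₀ = {0}` and, for `j ≥ 1`,
`E_j = {0} ∪ ⋃_{k=1}^{min(j,d)} (E_{j−k} + p_{j−k+1})`.
Here `p` is `0`-indexed, i.e. `p i` is `p_{i+1}` of the paper, and the union below is
over `k' = k - 1 < min(j, d)`, so `E_{j-k} + p_{j-k+1}` is the image of
`Ej d p (j - 1 - k')` under `(· + p (j - 1 - k'))`. -/
def Ej (d : ℕ) (p : ℕ → ℕ) : ℕ → Set ℕ
  | 0 => {0}
  | j + 1 => {0} ∪ ⋃ k ∈ Finset.range (min (j + 1) d), ((· + p (j - k)) '' Ej d p (j - k))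
  termination_by j => j
  decreasing_by omega

/-!
Write `S_n` for the right-hand side at length `n`, and call `F ⊆ [0, n)` admissible if it
satisfies the window condition. A nonempty admissible `F` has a largest element `m`; the window
right after `m` must be cut off by the end of the range, so `n - d ≤ m < n`, and `F \ {m}` is
admissible in `[0, m)`. Conversely, adding a new largest element `m ≥ n - d` to an admissible
subset of `[0, m)` keeps it admissible in `[0, n)`. Hence
`S_n = {0} ∪ ⋃_{n - d ≤ m < n} (S_m + p_m)`, which is the recursion defining `E_n`.
-/

open Finset

def GapBounded (d n : ℕ) (F : Finset ℕ) : Prop :=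
  ∀ i : ℕ, (∃ m ∈ F, m < i) → i + d ≤ n → ∃ k ∈ F, i ≤ k ∧ k < i + d

def gapBoundedSums (d : ℕ) (p : ℕ → ℕ) (n : ℕ) : Set ℕ :=
  { s : ℕ | ∃ F : Finset ℕ, F ⊆ range n ∧ GapBounded d n F ∧ s = ∑ i ∈ F, p i }

namespace GapBounded

variable {d n m : ℕ} {F : Finset ℕ}

theorem empty : GapBounded d n ∅ := by
  simp [GapBounded]

theorem mono (hF : GapBounded d n F) (hmn : m ≤ n) : GapBounded d m F :=
  fun i hi hid => hF i hi (hid.trans hmn)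

theorem erase (hF : GapBounded d n F) : GapBounded d n (F.erase n) := by
  rintro i ⟨l, hl, hli⟩ hid
  obtain ⟨k, hk, hik, hki⟩ := hF i ⟨l, mem_of_mem_erase hl, hli⟩ hid
  exact ⟨k, mem_erase.mpr ⟨by omega, hk⟩, hik, hki⟩

theorem insert (hF : GapBounded d m F) (hnm : n ≤ m + d) : GapBounded d n (insert m F) := by
  rintro i ⟨l, hl, hli⟩ hid
  by_cases hmi : m < i + d
  · exact ⟨m, mem_insert_self m F, by omega, hmi⟩
  · have hl : l ∈ F := (mem_insert.mp hl).resolve_left (by omega)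
    obtain ⟨k, hk, hik, hki⟩ := hF i ⟨l, hl, hli⟩ (by omega)
    exact ⟨k, mem_insert_of_mem hk, hik, hki⟩

theorem le_add_of_isGreatest (hF : GapBounded d n F) (hm : IsGreatest (F : Set ℕ) m) :
    n ≤ m + d := by
  by_contra! h
  obtain ⟨k, hk, hmk, -⟩ := hF (m + 1) ⟨m, hm.1, m.lt_succ_self⟩ (by omega)
  exact absurd (hm.2 hk) (by omega)

end GapBounded

theorem gapBoundedSums_zero (d : ℕ) (p : ℕ → ℕ) : gapBoundedSums d p 0 = {0} := by
  ext s
  simp only [gapBoundedSums, range_zero, subset_empty, Set.mem_ofPred_eq, Set.mem_singleton_iff]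
  constructor
  · rintro ⟨F, rfl, -, rfl⟩
    rfl
  · rintro rfl
    exact ⟨∅, rfl, GapBounded.empty, rfl⟩

theorem gapBoundedSums_succ (d : ℕ) (p : ℕ → ℕ) (j : ℕ) :
    gapBoundedSums d p (j + 1) =
      {0} ∪ ⋃ k ∈ range (min (j + 1) d), (· + p (j - k)) '' gapBoundedSums d p (j - k) := by
  ext s
  simp only [gapBoundedSums, Set.mem_union, Set.mem_iUnion, Set.mem_image, Set.mem_ofPred_eq,
    Set.mem_singleton_iff, mem_range, exists_prop, lt_min_iff]
  constructor
  · rintro ⟨F, hFj, hF, rfl⟩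
    obtain rfl | hne := F.eq_empty_or_nonempty
    · exact Or.inl rfl
    set m := F.max' hne
    have hm : IsGreatest (F : Set ℕ) m := F.isGreatest_max' hne
    have hmj : m < j + 1 := mem_range.mp (hFj hm.1)
    have hjm : j + 1 ≤ m + d := hF.le_add_of_isGreatest hm
    have hsub : j - (j - m) = m := by omega
    refine Or.inr ⟨j - m, ⟨by omega, by omega⟩, ∑ i ∈ F.erase m, p i, ?_, ?_⟩
    · rw [hsub]
      refine ⟨F.erase m, fun x hx => ?_, (hF.mono hmj.le).erase, rfl⟩
      have := hm.2 (mem_of_mem_erase hx)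
      have := ne_of_mem_erase hx
      rw [mem_range]
      omega
    · rw [hsub, sum_erase_add F p hm.1]
  · rintro (rfl | ⟨k, ⟨hkj, hkd⟩, _, ⟨F, hFj, hF, rfl⟩, rfl⟩)
    · exact ⟨∅, empty_subset _, GapBounded.empty, rfl⟩
    have hnotin : j - k ∉ F := fun h => by simpa using hFj h
    refine ⟨insert (j - k) F, insert_subset (mem_range.mpr (by omega)) ?_,
      hF.insert (by omega), ((sum_insert hnotin).trans (add_comm _ _)).symm⟩
    exact hFj.trans (range_subset_range.mpr (by omega))

theorem ej_eq_gapBoundedSums_general (d : ℕ) (p : ℕ → ℕ)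
    (j : ℕ) :
    Ej d p j = { s : ℕ | ∃ F : Finset ℕ, F ⊆ Finset.range j ∧
      (∀ i : ℕ, (∃ m ∈ F, m < i) → i + d ≤ j → ∃ k ∈ F, i ≤ k ∧ k < i + d) ∧
      s = ∑ i ∈ F, p i } := by
  change Ej d p j = gapBoundedSums d p j
  induction j using Nat.strong_induction_on with
  | _ j ih =>
    cases j with
    | zero => rw [Ej, gapBoundedSums_zero]
    | succ j =>
      rw [Ej, gapBoundedSums_succ]
      refine congrArg _ (Set.iUnion₂_congr fun k _ => ?_)
      rw [ih (j - k) (by omega)]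

/-- `E_j` equals the set of all sums `ε₁p₁ + ⋯ + ε_jp_j` over `ε ∈ {0,1}^j` (with `F`
the set of indices where `ε = 1`, `0`-indexed, so `F ⊆ range j`) such that after the
first index carrying a `1` there is no block of `d` consecutive indices at which `ε`
is `0`: every window `{i, …, i+d-1} ⊆ {0, …, j-1}` lying strictly after some element
of `F` meets `F`.  In particular `0 ∈ E_j`, corresponding to `ε` identically `0`. -/
theorem ej_eq_gapBoundedSums (d : ℕ) (hd : 1 ≤ d) (p : ℕ → ℕ) (hp : ∀ i, 0 < p i)
    (j : ℕ) :
    Ej d p j = { s : ℕ | ∃ F : Finset ℕ, F ⊆ Finset.range j ∧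
      (∀ i : ℕ, (∃ m ∈ F, m < i) → i + d ≤ j → ∃ k ∈ F, i ≤ k ∧ k < i + d) ∧
      s = ∑ i ∈ F, p i } :=
  ej_eq_gapBoundedSums_general d p j
end
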